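/- Let G_1 and G_2 be graphs with E(G_1) ∩ E(G_2) = {e}, where e is a loop of G_i incident with vertex v_i for i = 1,2, e is not a separator of B(G_1), and e is not a separator of B(G_2). If G is the loop-sum of G_1 and G_2 on e (the graph obtained from the disjoint union of G_1 - e and G_2 - e by identifying v_1 with v_2), then B(G) is the 2-sum of B(G_1) and B(G_2) along the basepoint e. -/

import Mathlib

open Matroid Set

namespace Bicirc

variable {α : Type*}

/-- A circuit of a matroid: a minimal dependent set. -/
def Circ (M : Matroid α) (C : Set α) : Prop :=
  M.Dep C ∧ ∀ D, D ⊂ C → M.Indep D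

/-- A cocircuit: a circuit of the dual matroid. -/
def Cocirc (M : Matroid α) (C : Set α) : Prop := Circ M✶ C

/-- Deletion of a set from a matroid. -/
def Del (M : Matroid α) (X : Set α) : Matroid α := M ↾ (M.E \ X)

/-- `e` is a loop of the matroid `M`. -/
def IsLoopE (M : Matroid α) (e : α) : Prop := Circ M {e}

/-- `e` is a coloop of the matroid `M`. -/
def IsColoopE (M : Matroid α) (e : α) : Prop := Cocirc M {e}

/-- A single element is a separator iff it is a loop or a coloop. -/
def SepElem (M : Matroid α) (e : α) : Prop := IsLoopE M e ∨ IsColoopE M e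

/-- The rank of a set in a matroid (as a natural number). -/
noncomputable def rk (M : Matroid α) (X : Set α) : ℕ :=
  sSup {n | ∃ I, M.Indep I ∧ I ⊆ X ∧ n = I.ncard}

/-- The rank of a matroid. -/
noncomputable def rkM (M : Matroid α) : ℕ := rk M M.E

/-- A matroid is connected if it is nonempty and every two distinct elements
lie in a common circuit. -/
def MConn (M : Matroid α) : Prop :=
  M.E.Nonempty ∧ ∀ e ∈ M.E, ∀ f ∈ M.E, e ≠ f → ∃ C, Circ M C ∧ e ∈ C ∧ f ∈ C

/-- `A` gives a `k`-separation `(A, M.E \ A)` of `M`. -/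
def KSep (M : Matroid α) (k : ℕ) (A : Set α) : Prop :=
  A ⊆ M.E ∧ k ≤ A.ncard ∧ k ≤ (M.E \ A).ncard ∧
    rk M A + rk M (M.E \ A) < rkM M + k

/-- A matroid is 3-connected if it has no `k`-separation for `k < 3`. -/
def ThreeConn (M : Matroid α) : Prop := ∀ k, 0 < k → k < 3 → ∀ A, ¬ KSep M k A

/-- Every pair of distinct elements of `C` lies in a common circuit of `M | C`. -/
def PairConn (M : Matroid α) (C : Set α) : Prop :=
  C ⊆ M.E ∧ ∀ e ∈ C, ∀ f ∈ C, e ≠ f → ∃ K, Circ (M ↾ C) K ∧ e ∈ K ∧ f ∈ K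

/-- `C` is a connected component of the matroid `M`. -/
def IsComp (M : Matroid α) (C : Set α) : Prop :=
  C.Nonempty ∧ PairConn M C ∧ ∀ D, PairConn M D → C ⊆ D → D = C

/-- A non-separating cocircuit: deleting it leaves a connected matroid. -/
def NonSepCocirc (M : Matroid α) (K : Set α) : Prop :=
  Cocirc M K ∧ MConn (Del M K)

/-- A cyclic flat: a flat whose restriction has no coloops. -/
def CyclicFlat (M : Matroid α) (Z : Set α) : Prop :=
  M.IsFlat Z ∧ ∀ e ∈ Z, ¬ IsColoopE (M ↾ Z) e

/-- `e` and `f` are clones: every cyclic flat contains one iff it contains the other. -/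
def Clones (M : Matroid α) (e f : α) : Prop :=
  ∀ Z, CyclicFlat M Z → (e ∈ Z ↔ f ∈ Z)

/-- A clonal class: a maximal set of pairwise clone elements. -/
def ClonalClass (M : Matroid α) (F : Set α) : Prop :=
  F ⊆ M.E ∧ (∀ e ∈ F, ∀ f ∈ F, Clones M e f) ∧
    ∀ F', F' ⊆ M.E → (∀ e ∈ F', ∀ f ∈ F', Clones M e f) → F ⊆ F' → F' = F

/-- Disjoint sets `X`, `Y` are skew: no circuit of `M` inside `X ∪ Y` meets both. -/
def Skew (M : Matroid α) (X Y : Set α) : Prop :=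
  ∀ C, Circ M C → C ⊆ X ∪ Y → (C ∩ X = ∅ ∨ C ∩ Y = ∅)

/-- A good cocircuit. -/
def GoodCocirc (M : Matroid α) (K : Set α) : Prop :=
  Cocirc M K ∧ (∃! D, IsComp (Del M K) D ∧ 1 < D.ncard) ∧
    ∀ x, IsColoopE (Del M K) x → ∀ D, IsComp (Del M K) D → 1 < D.ncard →
      ∃ F C, ClonalClass M F ∧ rk M F = 2 ∧ F ⊆ K ∧ Circ M C ∧ x ∈ C ∧
        C ∩ K ⊆ F ∧ (C ∩ K).ncard = 2 ∧ (C ∩ D).Nonempty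

/-! ### Multigraphs -/

/-- A multigraph on vertex type `V` with edge type `E`: each edge has a pair of ends. -/
structure MGraph (V : Type*) (E : Type*) where
  ends : E → Sym2 V

variable {V E : Type*}

/-- The vertices incident with at least one edge of `X`. -/
def VX (G : MGraph V E) (X : Set E) : Set V := {v | ∃ e ∈ X, v ∈ G.ends e}

/-- The set of edges incident with the vertex `v`. -/
def star (G : MGraph V E) (v : V) : Set E := {e | v ∈ G.ends e}

/-- The degree of `v` in the edge set `X` (loops count twice). -/
noncomputable def deg (G : MGraph V E) (X : Set E) (v : V) : ℕ :=
  ({e ∈ X | v ∈ G.ends e}).ncard + ({e ∈ X | G.ends e = s(v, v)}).ncard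

/-- Two edges of `X` sharing a vertex. -/
def EAdj (G : MGraph V E) (X : Set E) (a b : E) : Prop :=
  a ∈ X ∧ b ∈ X ∧ ∃ v, v ∈ G.ends a ∧ v ∈ G.ends b

/-- The subgraph `G[X]` is connected. -/
def ConnOn (G : MGraph V E) (X : Set E) : Prop :=
  ∀ a ∈ X, ∀ b ∈ X, Relation.ReflTransGen (EAdj G X) a b

/-- `C` is the edge set of a cycle of `G`. -/
def IsCycle (G : MGraph V E) (C : Set E) : Prop :=
  C.Nonempty ∧ ConnOn G C ∧ ∀ v ∈ VX G C, deg G C v = 2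

/-- `X` contains no cycle. -/
def Acyclic (G : MGraph V E) (X : Set E) : Prop := ∀ C, C ⊆ X → ¬ IsCycle G C

/-- `X` contains two distinct cycles. -/
def TwoCycles (G : MGraph V E) (X : Set E) : Prop :=
  ∃ C₁ C₂, C₁ ⊆ X ∧ C₂ ⊆ X ∧ IsCycle G C₁ ∧ IsCycle G C₂ ∧ C₁ ≠ C₂

/-- A bicycle: a minimal edge set inducing a connected subgraph with more than one cycle. -/
def IsBicycle (G : MGraph V E) (X : Set E) : Prop :=
  (ConnOn G X ∧ TwoCycles G X) ∧ ∀ Y, Y ⊂ X → ¬ (ConnOn G Y ∧ TwoCycles G Y)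

/-- `P` is the edge set of a path of `G` with end-vertices `u` and `v`. -/
def IsPathBtw (G : MGraph V E) (P : Set E) (u v : V) : Prop :=
  P.Nonempty ∧ ConnOn G P ∧ Acyclic G P ∧ u ≠ v ∧
    deg G P u = 1 ∧ deg G P v = 1 ∧ ∀ w ∈ VX G P, deg G P w ≤ 2

/-- `X` induces a theta subgraph of `G`. -/
def IsTheta (G : MGraph V E) (X : Set E) : Prop :=
  ∃ u v P₁ P₂ P₃, u ≠ v ∧
    IsPathBtw G P₁ u v ∧ IsPathBtw G P₂ u v ∧ IsPathBtw G P₃ u v ∧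
    P₁ ∩ P₂ = ∅ ∧ P₁ ∩ P₃ = ∅ ∧ P₂ ∩ P₃ = ∅ ∧
    VX G P₁ ∩ VX G P₂ = {u, v} ∧ VX G P₁ ∩ VX G P₃ = {u, v} ∧
    VX G P₂ ∩ VX G P₃ = {u, v} ∧ X = P₁ ∪ P₂ ∪ P₃

/-- `X` induces a loose handcuff of `G`. -/
def IsLooseHandcuff (G : MGraph V E) (X : Set E) : Prop :=
  ∃ C₁ C₂ P u v, IsCycle G C₁ ∧ IsCycle G C₂ ∧ VX G C₁ ∩ VX G C₂ = ∅ ∧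
    IsPathBtw G P u v ∧ VX G P ∩ VX G C₁ = {u} ∧ VX G P ∩ VX G C₂ = {v} ∧
    P ∩ C₁ = ∅ ∧ P ∩ C₂ = ∅ ∧ X = C₁ ∪ C₂ ∪ P

/-- `X` induces a tight handcuff of `G`. -/
def IsTightHandcuff (G : MGraph V E) (X : Set E) : Prop :=
  ∃ C₁ C₂ v, IsCycle G C₁ ∧ IsCycle G C₂ ∧ C₁ ∩ C₂ = ∅ ∧
    VX G C₁ ∩ VX G C₂ = {v} ∧ X = C₁ ∪ C₂

/-- Vertex adjacency via an edge. -/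
def VAdj (G : MGraph V E) (u w : V) : Prop := ∃ e, u ∈ G.ends e ∧ w ∈ G.ends e

/-- The graph `G` is connected. -/
def GConn (G : MGraph V E) : Prop := ∀ u w : V, Relation.ReflTransGen (VAdj G) u w

/-- The graph `G - x` is connected. -/
def ConnAvoid (G : MGraph V E) (x : V) : Prop :=
  ∀ u w : V, u ≠ x → w ≠ x →
    Relation.ReflTransGen
      (fun a b => a ≠ x ∧ b ≠ x ∧ ∃ e, x ∉ G.ends e ∧ a ∈ G.ends e ∧ b ∈ G.ends e) u w

/-- `G` is 2-connected: connected and with no cutvertex. -/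
def TwoConnGraph (G : MGraph V E) : Prop := GConn G ∧ ∀ x, ConnAvoid G x

/-- `C` is (the edge set of) a connected component of `G[X]`. -/
def IsGComp (G : MGraph V E) (X C : Set E) : Prop :=
  C ⊆ X ∧ C.Nonempty ∧ ConnOn G C ∧
    ∀ D, D ⊆ X → D.Nonempty → ConnOn G D → C ⊆ D → D = C

/-- The number of acyclic components of `G[X]`. -/
noncomputable def numAcyclicComps (G : MGraph V E) (X : Set E) : ℕ :=
  {C | IsGComp G X C ∧ Acyclic G C}.ncard

/-- `M` is the bicircular matroid of `G`: its circuits are precisely the bicycles. -/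
def IsBicircOf (G : MGraph V E) (M : Matroid E) : Prop :=
  M.E = Set.univ ∧ ∀ C, Circ M C ↔ IsBicycle G C

/-- The edge set `X` contains a pendent edge. -/
def PendentEdge (G : MGraph V E) (X : Set E) : Prop :=
  ∃ e ∈ X, ∃ w ∈ G.ends e, deg G X w = 1

/-- The graph `G - v` is a cycle. -/
def DelVIsCycle (G : MGraph V E) (v : V) : Prop :=
  IsCycle G {e | v ∉ G.ends e} ∧ ∀ w, w ≠ v → w ∈ VX G {e | v ∉ G.ends e}

/-! ### Matroid-labelled trees -/

/-- A matroid-labelled tree. -/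
structure MTree (α : Type*) where
  ι : Type
  fin : Fintype ι
  lab : ι → Matroid α
  adj : ι → ι → Prop
  symm : ∀ i j, adj i j → adj j i
  loopless : ∀ i, ¬ adj i i
  conn : ∀ i j, Relation.ReflTransGen adj i j
  acyc : ∀ i j, adj i j →
    ¬ Relation.ReflTransGen
        (fun a b => adj a b ∧ ¬(a = i ∧ b = j) ∧ ¬(a = j ∧ b = i)) i j
  card3 : (∃ i j : ι, i ≠ j) → ∀ i, 3 ≤ (lab i).E.ncard
  disj : ∀ i j, i ≠ j → ¬ adj i j → (lab i).E ∩ (lab j).E = ∅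
  meet : ∀ i j, adj i j →
    ∃ e, (lab i).E ∩ (lab j).E = {e} ∧ ¬ SepElem (lab i) e ∧ ¬ SepElem (lab j) e

/-- The basepoint elements of a matroid-labelled tree. -/
def MTree.bpts (T : MTree α) : Set α :=
  {e | ∃ i j, T.adj i j ∧ e ∈ (T.lab i).E ∧ e ∈ (T.lab j).E}

/-- The ground set of the matroid `M(T)`. -/
def MTree.ground (T : MTree α) : Set α := (⋃ i, (T.lab i).E) \ T.bpts

/-- The ground-set elements appearing in nodes of `S`. -/
def MTree.elems (T : MTree α) (S : Set T.ι) : Set α :=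
  (⋃ i ∈ S, (T.lab i).E) ∩ T.ground

/-- `S` induces a connected subgraph of the tree. -/
def MTree.SubConn (T : MTree α) (S : Set T.ι) : Prop :=
  ∀ i ∈ S, ∀ j ∈ S,
    Relation.ReflTransGen (fun a b => a ∈ S ∧ b ∈ S ∧ T.adj a b) i j

/-- The circuits of the matroid `M(T)`: glued along a connected subtree. -/
def MTree.IsTreeCircuit (T : MTree α) (C : Set α) : Prop :=
  ∃ (S : Set T.ι) (f : T.ι → Set α), S.Nonempty ∧ T.SubConn S ∧
    (∀ i ∈ S, Circ (T.lab i) (f i)) ∧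
    (∀ i ∈ S, ∀ j, T.adj i j → ∀ e, e ∈ (T.lab i).E → e ∈ (T.lab j).E →
      (e ∈ f i ↔ j ∈ S)) ∧
    C = (⋃ i ∈ S, f i) \ T.bpts

/-- `M = M(T)`. -/
def MTree.IsDecompOf (T : MTree α) (M : Matroid α) : Prop :=
  M.E = T.ground ∧ ∀ C, Circ M C ↔ T.IsTreeCircuit C

/-- A node whose matroid is a circuit. -/
def MTree.CircNode (T : MTree α) (i : T.ι) : Prop := Circ (T.lab i) (T.lab i).E

/-- A node whose matroid is a cocircuit. -/
def MTree.CocircNode (T : MTree α) (i : T.ι) : Prop := Cocirc (T.lab i) (T.lab i).E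

/-- `T` is the canonical (Cunningham–Edmonds) decomposition tree of `M`. -/
def MTree.IsCanonical (T : MTree α) (M : Matroid α) : Prop :=
  T.IsDecompOf M ∧
    (∀ i, ThreeConn (T.lab i) ∨ T.CircNode i ∨ T.CocircNode i) ∧
    ∀ i j, T.adj i j →
      ¬(T.CircNode i ∧ T.CircNode j) ∧ ¬(T.CocircNode i ∧ T.CocircNode j)

/-- The component of `T` minus the edge `{i, j}` containing `i`. -/
def MTree.side (T : MTree α) (i j : T.ι) : Set T.ι :=
  {k | Relation.ReflTransGen
        (fun a b => T.adj a b ∧ ¬(a = i ∧ b = j) ∧ ¬(a = j ∧ b = i)) i k}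

/-- `(A, B)` is displayed by an edge of `T`. -/
def MTree.DispEdge (T : MTree α) (A B : Set α) : Prop :=
  ∃ i j, T.adj i j ∧ A = T.elems (T.side i j) ∧ B = T.elems (T.side j i)

/-- The component of `T - n` containing `k`. -/
def MTree.compAvoid (T : MTree α) (n k : T.ι) : Set T.ι :=
  {k' | Relation.ReflTransGen (fun a b => T.adj a b ∧ a ≠ n ∧ b ≠ n) k k'}

/-- `(A, B)` is displayed by the node `n` of `T`. -/
def MTree.DispNode (T : MTree α) (n : T.ι) (A B : Set α) : Prop :=
  A ∪ B = T.ground ∧ A ∩ B = ∅ ∧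
    ∀ k, k ≠ n →
      (T.elems (T.compAvoid n k) ⊆ A ∨ T.elems (T.compAvoid n k) ⊆ B)

/-- `(A, B)` is a 2-separation of `M`. -/
def TwoSep (M : Matroid α) (A B : Set α) : Prop :=
  A ∪ B = M.E ∧ A ∩ B = ∅ ∧ 2 ≤ A.ncard ∧ 2 ≤ B.ncard ∧
    rk M A + rk M B ≤ rkM M + 1

/-- `X` is 2-separating in `M`. -/
def SepSet2 (M : Matroid α) (X : Set α) : Prop :=
  rk M X + rk M (M.E \ X) ≤ rkM M + 1

/-- A wedge relative to `A`: a maximal 2-separating nonempty proper subset of `M.E \ A`. -/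
def Wedge (M : Matroid α) (A X : Set α) : Prop :=
  X ⊆ M.E \ A ∧ X.Nonempty ∧ X ≠ M.E \ A ∧ SepSet2 M X ∧
    ∀ Y, Y ⊆ M.E \ A → Y.Nonempty → Y ≠ M.E \ A → SepSet2 M Y → X ⊆ Y → Y = X

/-- The rooted matroid `(N, L)` is bicircular: `N = B(H)` for some finite multigraph `H`
in which every element of `L` is a loop. -/
def RootedBicirc (N : Matroid α) (L : Set α) : Prop :=
  ∃ (V : Type) (_ : Fintype V) (_ : N.E.Finite) (G : MGraph V ↥N.E),
    (∀ D, Circ N D ↔ ∃ C : Set ↥N.E, IsBicycle G C ∧ D = Subtype.val '' C) ∧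
    ∀ l : ↥N.E, l.1 ∈ L → (G.ends l).IsDiag

end Bicirc

namespace Bicirc

open Classical in
/-- The map identifying `v₂` with `v₁` in the loop-sum. -/
noncomputable def phiLoop {V₁ V₂ : Type*} (v₁ : V₁) (v₂ : V₂) (v : V₂) :
    V₁ ⊕ {w : V₂ // w ≠ v₂} :=
  if h : v = v₂ then Sum.inl v₁ else Sum.inr ⟨v, h⟩

/-- The loop-sum of `G₁` and `G₂` on the loops `e₁`, `e₂` at `v₁`, `v₂`. -/
noncomputable def loopSum {V₁ E₁ V₂ E₂ : Type*} (G₁ : MGraph V₁ E₁) (G₂ : MGraph V₂ E₂)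
    (e₁ : E₁) (e₂ : E₂) (v₁ : V₁) (v₂ : V₂) :
    MGraph (V₁ ⊕ {w : V₂ // w ≠ v₂}) ({a : E₁ // a ≠ e₁} ⊕ {b : E₂ // b ≠ e₂}) where
  ends := fun f => match f with
    | Sum.inl a => (G₁.ends a.1).map Sum.inl
    | Sum.inr b => (G₂.ends b.1).map (phiLoop v₁ v₂)

/-- Lift a subset of `E₁` into the ground set of the 2-sum. -/
def liftL {E₁ E₂ : Type*} (e₁ : E₁) (e₂ : E₂) (S : Set E₁) :
    Set ({a : E₁ // a ≠ e₁} ⊕ {b : E₂ // b ≠ e₂}) :=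
  {f | ∃ a : {a : E₁ // a ≠ e₁}, a.1 ∈ S ∧ f = Sum.inl a}

/-- Lift a subset of `E₂` into the ground set of the 2-sum. -/
def liftR {E₁ E₂ : Type*} (e₁ : E₁) (e₂ : E₂) (S : Set E₂) :
    Set ({a : E₁ // a ≠ e₁} ⊕ {b : E₂ // b ≠ e₂}) :=
  {f | ∃ b : {b : E₂ // b ≠ e₂}, b.1 ∈ S ∧ f = Sum.inr b}

/-- `C` is a circuit of the 2-sum of `M₁` and `M₂` along the basepoint `e₁ = e₂`. -/
def TwoSumCirc {E₁ E₂ : Type*} (M₁ : Matroid E₁) (M₂ : Matroid E₂) (e₁ : E₁) (e₂ : E₂)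
    (C : Set ({a : E₁ // a ≠ e₁} ⊕ {b : E₂ // b ≠ e₂})) : Prop :=
  (∃ C₁, Circ M₁ C₁ ∧ e₁ ∉ C₁ ∧ C = liftL e₁ e₂ C₁) ∨
  (∃ C₂, Circ M₂ C₂ ∧ e₂ ∉ C₂ ∧ C = liftR e₁ e₂ C₂) ∨
  (∃ C₁ C₂, Circ M₁ C₁ ∧ Circ M₂ C₂ ∧ e₁ ∈ C₁ ∧ e₂ ∈ C₂ ∧
    C = liftL e₁ e₂ C₁ ∪ liftR e₁ e₂ C₂)

end Bicirc

/-!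
The loop-sum `H` is the one-point union, at the identified vertex `w = v₁ = v₂`, of `G₁ - e₁`
and `G₂ - e₂`. A parity count at `w` shows that every cycle of `H` lies on one side. So a bicycle
`C` of `H` either lies on one side, where it is a bicycle of `Gᵢ` avoiding `eᵢ`, or meets both
sides; then each side of `C` is connected through `w` and contains a cycle, and minimality of `C`
forces each side, with the loop `eᵢ` standing in for the other side, to be a bicycle of `Gᵢ`.
Conversely, two bicycles through `e₁` and `e₂` glue to a connected subgraph of `H` with two
cycles; it is minimal because any bicycle inside it decomposes, by the first part, into
bicycles of `G₁` and `G₂` inside the given ones.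
-/

namespace Bicirc

variable {V E W F : Type*}

section Reachability

variable {G : MGraph V E} {X Y S T A : Set E} {a b : E} {v : V}

lemma EAdj.symm (h : EAdj G X a b) : EAdj G X b a :=
  let ⟨ha, hb, u, hua, hub⟩ := h
  ⟨hb, ha, u, hub, hua⟩

lemma EAdj.mono (hXY : X ⊆ Y) (h : EAdj G X a b) : EAdj G Y a b :=
  ⟨hXY h.1, hXY h.2.1, h.2.2⟩

lemma reflTransGen_eAdj_symm (h : Relation.ReflTransGen (EAdj G X) a b) :
    Relation.ReflTransGen (EAdj G X) b a :=
  have : Std.Symm (EAdj G X) := ⟨fun _ _ => EAdj.symm⟩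
  Std.Symm.symm _ _ h

lemma reflTransGen_eAdj_mono (hXY : X ⊆ Y) (h : Relation.ReflTransGen (EAdj G X) a b) :
    Relation.ReflTransGen (EAdj G Y) a b :=
  Relation.ReflTransGen.mono (fun _ _ => EAdj.mono hXY) _ _ h

lemma exists_last_eAdj_of_reflTransGen {z : E} (h : Relation.ReflTransGen (EAdj G X) a z)
    (ha : a ≠ z) :
    ∃ c ∈ X \ {z}, (∃ u, u ∈ G.ends c ∧ u ∈ G.ends z) ∧
      Relation.ReflTransGen (EAdj G (X \ {z})) a c := by
  induction h using Relation.ReflTransGen.head_induction_on with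
  | refl => exact absurd rfl ha
  | @head x y hxy _ ih =>
    by_cases hy : y = z
    · subst hy
      exact ⟨x, ⟨hxy.1, ha⟩, hxy.2.2, .refl⟩
    · obtain ⟨c, hc, hcz, hyc⟩ := ih hy
      exact ⟨c, hc, hcz, .head ⟨⟨hxy.1, ha⟩, ⟨hxy.2.1, hy⟩, hxy.2.2⟩ hyc⟩

lemma exists_eAdj_exit_of_reflTransGen (h : Relation.ReflTransGen (EAdj G X) a b) (ha : a ∈ A)
    (hb : b ∉ A) :
    ∃ x ∈ A, ∃ y ∉ A, EAdj G X x y ∧ Relation.ReflTransGen (EAdj G (X ∩ A)) a x := by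
  induction h using Relation.ReflTransGen.head_induction_on with
  | refl => exact absurd ha hb
  | @head x y hxy _ ih =>
    by_cases hy : y ∈ A
    · obtain ⟨p, hp, q, hq, hpq, hyp⟩ := ih hy
      exact ⟨p, hp, q, hq, hpq, .head ⟨⟨hxy.1, ha⟩, ⟨hxy.2.1, hy⟩, hxy.2.2⟩ hyp⟩
    · exact ⟨x, ha, y, hy, hxy, .refl⟩

/-- Every component of `G[S]` contains an edge at `v`. -/
def AnchoredAt (G : MGraph V E) (S : Set E) (v : V) : Prop :=
  ∀ x ∈ S, ∃ y ∈ S, v ∈ G.ends y ∧ Relation.ReflTransGen (EAdj G S) x y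

lemma AnchoredAt.connOn (h : AnchoredAt G S v) : ConnOn G S := by
  intro a ha b hb
  obtain ⟨x, hx, hvx, hax⟩ := h a ha
  obtain ⟨y, hy, hvy, hby⟩ := h b hb
  exact (hax.tail ⟨hx, hy, v, hvx, hvy⟩).trans (reflTransGen_eAdj_symm hby)

lemma AnchoredAt.union (hS : AnchoredAt G S v) (hT : AnchoredAt G T v) :
    AnchoredAt G (S ∪ T) v := by
  rintro x (hx | hx)
  · obtain ⟨y, hy, hvy, hxy⟩ := hS x hx
    exact ⟨y, .inl hy, hvy, reflTransGen_eAdj_mono subset_union_left hxy⟩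
  · obtain ⟨y, hy, hvy, hxy⟩ := hT x hx
    exact ⟨y, .inr hy, hvy, reflTransGen_eAdj_mono subset_union_right hxy⟩

lemma anchoredAt_singleton {ℓ : E} (hv : v ∈ G.ends ℓ) : AnchoredAt G {ℓ} v := by
  rintro x rfl
  exact ⟨x, rfl, hv, .refl⟩

end Reachability

section Loops

variable {G : MGraph V E} {S X D K : Set E} {ℓ : E} {v w : V}

lemma mem_ends_of_loop (hℓ : G.ends ℓ = s(v, v)) : v ∈ G.ends ℓ := by
  rw [hℓ]; exact Sym2.mem_mk_left v v

lemma eq_of_mem_ends_loop (hℓ : G.ends ℓ = s(v, v)) (hw : w ∈ G.ends ℓ) : w = v := by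
  rw [hℓ, Sym2.mem_iff, or_self] at hw; exact hw

lemma connOn_insert_loop_iff (hℓ : G.ends ℓ = s(v, v)) (hS : ℓ ∉ S) :
    ConnOn G (insert ℓ S) ↔ AnchoredAt G S v := by
  refine ⟨fun h x hx => ?_, fun h => ?_⟩
  · obtain ⟨c, hc, ⟨u, huc, huℓ⟩, hxc⟩ := exists_last_eAdj_of_reflTransGen
      (h x (.inr hx) ℓ (.inl rfl)) (ne_of_mem_of_not_mem hx hS)
    rw [insert_sdiff_self_of_notMem hS] at hc hxc
    exact ⟨c, hc, eq_of_mem_ends_loop hℓ huℓ ▸ huc, hxc⟩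
  · rw [insert_eq]
    exact ((anchoredAt_singleton (mem_ends_of_loop hℓ)).union h).connOn

lemma isCycle_singleton_loop (hℓ : G.ends ℓ = s(v, v)) : IsCycle G {ℓ} := by
  refine ⟨singleton_nonempty ℓ, (anchoredAt_singleton (mem_ends_of_loop hℓ)).connOn, ?_⟩
  rintro w ⟨x, rfl, hw⟩
  obtain rfl := eq_of_mem_ends_loop hℓ hw
  have h₁ : {e ∈ ({x} : Set E) | w ∈ G.ends e} = {x} := by ext; simp +contextual [hw]
  have h₂ : {e ∈ ({x} : Set E) | G.ends e = s(w, w)} = {x} := by ext; simp +contextual [hℓ]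
  rw [deg, h₁, h₂, ncard_singleton]

/-- The loop already uses up the degree `2` at `v`. -/
lemma IsCycle.eq_singleton_of_loop [Finite E] (hD : IsCycle G D) (hℓ : G.ends ℓ = s(v, v))
    (hℓD : ℓ ∈ D) : D = {ℓ} := by
  have h2 := hD.2.2 v ⟨ℓ, hℓD, mem_ends_of_loop hℓ⟩
  have hloop : 1 ≤ {e ∈ D | G.ends e = s(v, v)}.ncard :=
    (ncard_pos (toFinite _)).2 ⟨ℓ, hℓD, hℓ⟩
  have hat : {e ∈ D | v ∈ G.ends e}.ncard ≤ 1 := by rw [deg] at h2; omega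
  refine eq_singleton_iff_unique_mem.2 ⟨hℓD, fun d hd => by_contra fun hdℓ => ?_⟩
  obtain ⟨c, hc, ⟨u, huc, huℓ⟩, -⟩ :=
    exists_last_eAdj_of_reflTransGen (hD.2.1 d hd ℓ hℓD) hdℓ
  exact hc.2 ((ncard_le_one (toFinite _)).1 hat c ⟨hc.1, eq_of_mem_ends_loop hℓ huℓ ▸ huc⟩
    ℓ ⟨hℓD, mem_ends_of_loop hℓ⟩)

lemma TwoCycles.exists_isCycle_subset_diff_loop [Finite E] (h : TwoCycles G X)
    (hℓ : G.ends ℓ = s(v, v)) : ∃ K ⊆ X \ {ℓ}, IsCycle G K := by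
  obtain ⟨K₁, K₂, h₁, h₂, hc₁, hc₂, hne⟩ := h
  by_cases hℓ₁ : ℓ ∈ K₁
  · have hℓ₂ : ℓ ∉ K₂ := fun hℓ₂ =>
      hne ((hc₁.eq_singleton_of_loop hℓ hℓ₁).trans (hc₂.eq_singleton_of_loop hℓ hℓ₂).symm)
    exact ⟨K₂, subset_sdiff_singleton h₂ hℓ₂, hc₂⟩
  · exact ⟨K₁, subset_sdiff_singleton h₁ hℓ₁, hc₁⟩

lemma twoCycles_insert_loop (hℓ : G.ends ℓ = s(v, v)) (hK : IsCycle G K) (hKS : K ⊆ S)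
    (hℓK : ℓ ∉ K) : TwoCycles G (insert ℓ S) :=
  ⟨{ℓ}, K, singleton_subset_iff.2 (mem_insert ℓ S), hKS.trans (subset_insert ℓ S),
    isCycle_singleton_loop hℓ, hK, fun h => hℓK (h ▸ rfl)⟩

end Loops

section Bicycles

variable {G : MGraph V E} {X Z C : Set E}

lemma IsBicycle.eq_of_subset (hC : IsBicycle G C) (hZC : Z ⊆ C)
    (hZ : ConnOn G Z ∧ TwoCycles G Z) : Z = C :=
  by_contra fun hne => hC.2 Z (hZC.ssubset_of_ne hne) hZ

lemma exists_isBicycle_subset [Finite E] (hX : ConnOn G X ∧ TwoCycles G X) :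
    ∃ B ⊆ X, IsBicycle G B := by
  obtain ⟨B, hBX, hB⟩ :=
    exists_minimal_le_of_wellFoundedLT (fun Y => ConnOn G Y ∧ TwoCycles G Y) X hX
  exact ⟨B, hBX, hB.1, fun Y hYB hY => hYB.2 (hB.2 hY hYB.1)⟩

end Bicycles

section Degrees

variable {G : MGraph V E} {X D : Set E} {x : E} {v w : V}

lemma deg_eq_zero_of_notMem_VX (hv : v ∉ VX G X) : deg G X v = 0 := by
  have h₁ : {e ∈ X | v ∈ G.ends e} = ∅ := eq_empty_of_forall_notMem fun e he => hv ⟨e, he⟩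
  have h₂ : {e ∈ X | G.ends e = s(v, v)} = ∅ :=
    eq_empty_of_forall_notMem fun e he => hv ⟨e, he.1, he.2 ▸ Sym2.mem_mk_left v v⟩
  rw [deg, h₁, h₂, ncard_empty]

lemma one_le_deg [Finite E] (hx : x ∈ X) (hv : v ∈ G.ends x) : 1 ≤ deg G X v := by
  have : 0 < {e ∈ X | v ∈ G.ends e}.ncard := (ncard_pos (toFinite _)).2 ⟨x, hx, hv⟩
  rw [deg]; omega

lemma deg_inter_add_deg_inter_compl [Finite E] (X A : Set E) (v : V) :
    deg G (X ∩ A) v + deg G (X ∩ Aᶜ) v = deg G X v := by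
  have split (p : E → Prop) :
      {e ∈ X ∩ A | p e}.ncard + {e ∈ X ∩ Aᶜ | p e}.ncard = {e ∈ X | p e}.ncard := by
    rw [← ncard_inter_add_ncard_sdiff_eq_ncard {e ∈ X | p e} A (toFinite _)]
    congr 2 <;> ext e <;> simp [and_right_comm]
  have h₁ := split (v ∈ G.ends ·)
  have h₂ := split (G.ends · = s(v, v))
  simp only [deg] at *
  omega

lemma IsCycle.even_deg (hD : IsCycle G D) (v : V) : Even (deg G D v) := by
  by_cases hv : v ∈ VX G D
  · rw [hD.2.2 v hv]; exact even_two
  · rw [deg_eq_zero_of_notMem_VX hv]; exact .zero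

lemma ncard_mem_ends_add_ncard_loop (G : MGraph V E) (e : E) :
    {v | v ∈ G.ends e}.ncard + {v | G.ends e = s(v, v)}.ncard = 2 := by
  induction G.ends e using Sym2.ind with
  | _ a b =>
    by_cases hab : a = b
    · subst hab
      have h₁ : {v | v ∈ s(a, a)} = {a} := by ext v; simp
      have h₂ : {v | s(a, a) = s(v, v)} = {a} := by ext v; simp [eq_comm]
      rw [h₁, h₂, ncard_singleton]
    · have h₁ : {v | v ∈ s(a, b)} = {a, b} := by ext v; simp
      have h₂ : {v | s(a, b) = s(v, v)} = ∅ := by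
        ext v; simp only [mem_ofPred_eq, Sym2.eq_iff, mem_empty_iff_false, iff_false]
        rintro (⟨rfl, rfl⟩ | ⟨rfl, rfl⟩) <;> exact hab rfl
      rw [h₁, h₂, ncard_pair hab, ncard_empty]

open Classical in
lemma ncard_eq_sum_ite {α : Type*} [Fintype α] (s : Set α) :
    s.ncard = ∑ a, if a ∈ s then 1 else 0 := by
  rw [Finset.sum_boole, ncard_eq_toFinset_card', Nat.cast_id]
  congr 1; ext; simp

open Classical in
lemma sum_deg [Fintype V] [Fintype E] (G : MGraph V E) (X : Set E) :
    ∑ v, deg G X v = 2 * X.ncard := by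
  calc ∑ v, deg G X v
      = ∑ e, ∑ v, ((if e ∈ {e ∈ X | v ∈ G.ends e} then 1 else 0) +
          (if e ∈ {e ∈ X | G.ends e = s(v, v)} then 1 else 0)) := by
        rw [Finset.sum_comm]
        simp only [deg, ncard_eq_sum_ite {e ∈ X | _}, Finset.sum_add_distrib]
        congr!
    _ = ∑ e, if e ∈ X then 2 else 0 := by
        refine Finset.sum_congr rfl fun e _ => ?_
        by_cases he : e ∈ X
        · rw [if_pos he, ← ncard_mem_ends_add_ncard_loop G e, ncard_eq_sum_ite, ncard_eq_sum_ite,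
            ← Finset.sum_add_distrib]
          simp only [he, true_and, mem_ofPred_eq]
          congr!
        · simp [he]
    _ = 2 * X.ncard := by
        rw [ncard_eq_sum_ite X, Finset.mul_sum]
        exact Finset.sum_congr rfl fun e _ => by split_ifs <;> rfl

lemma even_deg_of_forall_ne [Fintype V] [Fintype E] (h : ∀ u ≠ w, Even (deg G X u)) :
    Even (deg G X w) := by
  classical
  have hsum : Even (∑ v, deg G X v) := sum_deg G X ▸ even_two_mul _
  rw [← Finset.add_sum_erase _ _ (Finset.mem_univ w)] at hsum
  exact (Nat.even_add.mp hsum).mpr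
    (Finset.even_sum _ fun u hu => h u (Finset.ne_of_mem_erase hu))

end Degrees

section Split

variable {H : MGraph W F} {A Z C D : Set F} {w u : W}

/-- `H` is the one-point union, at `w`, of the subgraphs formed by `A` and by `Aᶜ`. -/
def SplitsAt (H : MGraph W F) (A : Set F) (w : W) : Prop :=
  ∀ x ∈ A, ∀ y ∈ Aᶜ, ∀ u ∈ H.ends x, u ∈ H.ends y → u = w

lemma SplitsAt.compl (h : SplitsAt H A w) : SplitsAt H Aᶜ w :=
  fun x hx y hy u hux huy => h y (by rwa [compl_compl] at hy) x hx u huy hux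

lemma SplitsAt.anchoredAt_inter (h : SplitsAt H A w) (hZ : ConnOn H Z)
    (hZA : (Z ∩ Aᶜ).Nonempty) : AnchoredAt H (Z ∩ A) w := by
  intro x hx
  obtain ⟨y, hyZ, hyA⟩ := hZA
  obtain ⟨p, hpA, q, hqA, ⟨hpZ, -, u, hup, huq⟩, hxp⟩ :=
    exists_eAdj_exit_of_reflTransGen (hZ x hx.1 y hyZ) hx.2 hyA
  exact ⟨p, ⟨hpZ, hpA⟩, h p hpA q hqA u hup huq ▸ hup, hxp⟩

lemma SplitsAt.even_deg_inter [Finite F] (h : SplitsAt H A w) (hD : IsCycle H D) (hu : u ≠ w) :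
    Even (deg H (D ∩ A) u) := by
  by_cases hy : ∃ y ∈ D ∩ Aᶜ, u ∈ H.ends y
  · obtain ⟨y, hy, huy⟩ := hy
    rw [deg_eq_zero_of_notMem_VX fun ⟨x, hx, hux⟩ => hu (h x hx.2 y hy.2 u hux huy)]
    exact .zero
  · have h₀ := deg_eq_zero_of_notMem_VX (G := H) fun ⟨y, hy', huy⟩ => hy ⟨y, hy', huy⟩
    rw [← add_zero (deg H (D ∩ A) u), ← h₀, deg_inter_add_deg_inter_compl]
    exact hD.even_deg u

/-- Otherwise the part of `D` in `A` would have degree `1` at `w` and even degree elsewhere. -/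
lemma SplitsAt.isCycle_subset_or [Finite W] [Finite F] (h : SplitsAt H A w)
    (hD : IsCycle H D) : D ⊆ A ∨ D ⊆ Aᶜ := by
  have := Fintype.ofFinite W
  have := Fintype.ofFinite F
  by_contra! hmix
  obtain ⟨y, hyD, hyA⟩ := not_subset.1 hmix.1
  obtain ⟨x, hxD, hxA⟩ := not_subset.1 hmix.2
  rw [notMem_compl_iff] at hxA
  obtain ⟨p, hp, hwp, -⟩ := h.anchoredAt_inter hD.2.1 ⟨y, hyD, hyA⟩ x ⟨hxD, hxA⟩
  obtain ⟨q, hq, hwq, -⟩ :=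
    h.compl.anchoredAt_inter hD.2.1 ⟨x, hxD, by rwa [compl_compl]⟩ y ⟨hyD, hyA⟩
  have hsum := deg_inter_add_deg_inter_compl (G := H) D A w
  rw [hD.2.2 w ⟨p, hp.1, hwp⟩] at hsum
  have hA := one_le_deg hp hwp
  have hAc := one_le_deg hq hwq
  have hodd : deg H (D ∩ A) w = 1 := by omega
  have heven := even_deg_of_forall_ne fun u hu => h.even_deg_inter hD hu
  rw [hodd] at heven
  exact Nat.not_even_one heven

lemma SplitsAt.not_twoCycles_inter (h : SplitsAt H A w) (hC : IsBicycle H C)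
    (hCA : (C ∩ Aᶜ).Nonempty) : ¬ TwoCycles H (C ∩ A) := fun htwo => by
  obtain ⟨y, hyC, hyA⟩ := hCA
  have := hC.eq_of_subset inter_subset_left
    ⟨(h.anchoredAt_inter hC.1.1 ⟨y, hyC, hyA⟩).connOn, htwo⟩
  exact hyA (inter_eq_left.1 this hyC)

lemma SplitsAt.exists_isCycle_subset_inter [Finite W] [Finite F] (h : SplitsAt H A w)
    (hC : IsBicycle H C) (hA : (C ∩ A).Nonempty) : ∃ K ⊆ C ∩ A, IsCycle H K := by
  obtain ⟨-, K₁, K₂, h₁, h₂, hc₁, hc₂, hne⟩ := hC.1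
  rcases h.isCycle_subset_or hc₁ with hK₁ | hK₁
  · exact ⟨K₁, subset_inter h₁ hK₁, hc₁⟩
  rcases h.isCycle_subset_or hc₂ with hK₂ | hK₂
  · exact ⟨K₂, subset_inter h₂ hK₂, hc₂⟩
  exact absurd ⟨K₁, K₂, subset_inter h₁ hK₁, subset_inter h₂ hK₂, hc₁, hc₂, hne⟩
    (h.compl.not_twoCycles_inter hC (by rwa [compl_compl]))

end Split

structure IsEmbedding (G : MGraph V E) (H : MGraph W F) (φ : E → F) (σ : V → W) : Prop where
  injective_edge : φ.Injective
  injective_vert : σ.Injective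
  ends_eq (a : E) : H.ends (φ a) = (G.ends a).map σ

namespace IsEmbedding

variable {G : MGraph V E} {H : MGraph W F} {φ : E → F} {σ : V → W} {a b : E} {v : V}

lemma mem_ends_iff (hemb : IsEmbedding G H φ σ) : σ v ∈ H.ends (φ a) ↔ v ∈ G.ends a := by
  rw [hemb.ends_eq, Sym2.mem_map]
  exact ⟨fun ⟨b, hb, he⟩ => hemb.injective_vert he ▸ hb, fun h => ⟨v, h, rfl⟩⟩

lemma ends_eq_loop_iff (hemb : IsEmbedding G H φ σ) :
    H.ends (φ a) = s(σ v, σ v) ↔ G.ends a = s(v, v) := by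
  rw [hemb.ends_eq, ← Sym2.map_mk, (Sym2.map.injective hemb.injective_vert).eq_iff]

lemma exists_eq_of_mem_ends (hemb : IsEmbedding G H φ σ) {u : W} (hu : u ∈ H.ends (φ a)) :
    ∃ v ∈ G.ends a, σ v = u :=
  Sym2.mem_map.1 (hemb.ends_eq a ▸ hu)

lemma deg_image (hemb : IsEmbedding G H φ σ) (S : Set E) (v : V) :
    deg H (φ '' S) (σ v) = deg G S v := by
  have sep_image {p : F → Prop} {q : E → Prop} (hpq : ∀ a, p (φ a) ↔ q a) :
      {e ∈ φ '' S | p e} = φ '' {a ∈ S | q a} := by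
    ext e
    constructor
    · rintro ⟨⟨a, ha, rfl⟩, hp⟩
      exact ⟨a, ⟨ha, (hpq a).1 hp⟩, rfl⟩
    · rintro ⟨a, ⟨ha, hq⟩, rfl⟩
      exact ⟨⟨a, ha, rfl⟩, (hpq a).2 hq⟩
  rw [deg, deg, sep_image fun _ => hemb.mem_ends_iff, sep_image fun _ => hemb.ends_eq_loop_iff,
    ncard_image_of_injective _ hemb.injective_edge, ncard_image_of_injective _ hemb.injective_edge]

lemma VX_image (hemb : IsEmbedding G H φ σ) (S : Set E) : VX H (φ '' S) = σ '' VX G S := by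
  ext u
  constructor
  · rintro ⟨_, ⟨a, ha, rfl⟩, hu⟩
    obtain ⟨v, hv, rfl⟩ := hemb.exists_eq_of_mem_ends hu
    exact ⟨v, ⟨a, ha, hv⟩, rfl⟩
  · rintro ⟨v, ⟨a, ha, hv⟩, rfl⟩
    exact ⟨φ a, ⟨a, ha, rfl⟩, hemb.mem_ends_iff.2 hv⟩

lemma eAdj_image_iff (hemb : IsEmbedding G H φ σ) (S : Set E) :
    EAdj H (φ '' S) (φ a) (φ b) ↔ EAdj G S a b := by
  simp only [EAdj, hemb.injective_edge.mem_set_image]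
  constructor
  · rintro ⟨ha, hb, u, hua, hub⟩
    obtain ⟨v, hv, rfl⟩ := hemb.exists_eq_of_mem_ends hua
    exact ⟨ha, hb, v, hv, hemb.mem_ends_iff.1 hub⟩
  · rintro ⟨ha, hb, v, hva, hvb⟩
    exact ⟨ha, hb, σ v, hemb.mem_ends_iff.2 hva, hemb.mem_ends_iff.2 hvb⟩

lemma reflTransGen_image_iff (hemb : IsEmbedding G H φ σ) (S : Set E) :
    Relation.ReflTransGen (EAdj H (φ '' S)) (φ a) (φ b) ↔
      Relation.ReflTransGen (EAdj G S) a b := by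
  refine ⟨fun h => ?_, fun h => h.lift φ fun x y hxy => (hemb.eAdj_image_iff S).2 hxy⟩
  suffices ∀ y, Relation.ReflTransGen (EAdj H (φ '' S)) (φ a) y →
      ∀ c, y = φ c → Relation.ReflTransGen (EAdj G S) a c from this _ h b rfl
  intro y hy
  induction hy with
  | refl => exact fun c hc => hemb.injective_edge hc ▸ .refl
  | tail _ hpq ih =>
    rintro c rfl
    obtain ⟨m, -, rfl⟩ := hpq.1
    exact (ih m rfl).tail ((hemb.eAdj_image_iff S).1 hpq)

lemma connOn_image_iff (hemb : IsEmbedding G H φ σ) (S : Set E) :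
    ConnOn H (φ '' S) ↔ ConnOn G S := by
  simp only [ConnOn, forall_mem_image, hemb.reflTransGen_image_iff]

lemma anchoredAt_image_iff (hemb : IsEmbedding G H φ σ) (S : Set E) (v : V) :
    AnchoredAt H (φ '' S) (σ v) ↔ AnchoredAt G S v := by
  simp only [AnchoredAt, forall_mem_image, exists_mem_image, hemb.mem_ends_iff,
    hemb.reflTransGen_image_iff]

lemma isCycle_image_iff (hemb : IsEmbedding G H φ σ) (S : Set E) :
    IsCycle H (φ '' S) ↔ IsCycle G S := by
  simp only [IsCycle, image_nonempty, hemb.connOn_image_iff, hemb.VX_image, forall_mem_image,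
    hemb.deg_image]

lemma twoCycles_image_iff (hemb : IsEmbedding G H φ σ) (S : Set E) :
    TwoCycles H (φ '' S) ↔ TwoCycles G S := by
  constructor
  · rintro ⟨K₁, K₂, h₁, h₂, hc₁, hc₂, hne⟩
    obtain ⟨K₁, hK₁, rfl⟩ := subset_image_iff.1 h₁
    obtain ⟨K₂, hK₂, rfl⟩ := subset_image_iff.1 h₂
    exact ⟨K₁, K₂, hK₁, hK₂, (hemb.isCycle_image_iff K₁).1 hc₁, (hemb.isCycle_image_iff K₂).1 hc₂,
      fun h => hne (h ▸ rfl)⟩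
  · rintro ⟨K₁, K₂, h₁, h₂, hc₁, hc₂, hne⟩
    exact ⟨φ '' K₁, φ '' K₂, image_mono h₁, image_mono h₂, (hemb.isCycle_image_iff K₁).2 hc₁,
      (hemb.isCycle_image_iff K₂).2 hc₂, fun h => hne (image_injective.2 hemb.injective_edge h)⟩

lemma isBicycle_image_iff (hemb : IsEmbedding G H φ σ) (S : Set E) :
    IsBicycle H (φ '' S) ↔ IsBicycle G S := by
  have hssub {T : Set E} : φ '' T ⊂ φ '' S ↔ T ⊂ S := by
    simp only [ssubset_def, image_subset_image_iff hemb.injective_edge]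
  constructor
  · rintro ⟨⟨hconn, htwo⟩, hmin⟩
    refine ⟨⟨(hemb.connOn_image_iff S).1 hconn, (hemb.twoCycles_image_iff S).1 htwo⟩, ?_⟩
    rintro T hT ⟨hTconn, hTtwo⟩
    exact hmin (φ '' T) (hssub.2 hT)
      ⟨(hemb.connOn_image_iff T).2 hTconn, (hemb.twoCycles_image_iff T).2 hTtwo⟩
  · rintro ⟨⟨hconn, htwo⟩, hmin⟩
    refine ⟨⟨(hemb.connOn_image_iff S).2 hconn, (hemb.twoCycles_image_iff S).2 htwo⟩, ?_⟩
    rintro T hT ⟨hTconn, hTtwo⟩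
    obtain ⟨T, -, rfl⟩ := subset_image_iff.1 hT.subset
    exact hmin T (hssub.1 hT)
      ⟨(hemb.connOn_image_iff T).1 hTconn, (hemb.twoCycles_image_iff T).1 hTtwo⟩

end IsEmbedding

def MGraph.deleteEdge (G : MGraph V E) (ℓ : E) : MGraph V {a : E // a ≠ ℓ} :=
  ⟨fun a => G.ends a⟩

lemma isEmbedding_deleteEdge (G : MGraph V E) (ℓ : E) :
    IsEmbedding (G.deleteEdge ℓ) G Subtype.val id :=
  ⟨Subtype.val_injective, Function.injective_id, fun a => by rw [Sym2.map_id]; rfl⟩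

lemma image_val_preimage_val (ℓ : E) (S : Set E) :
    Subtype.val '' (Subtype.val ⁻¹' S : Set {a : E // a ≠ ℓ}) = S \ {ℓ} := by
  ext; simp [and_comm]

section LoopDeletion

variable {G : MGraph V E} {H : MGraph W F} {ℓ : E} {v : V} {φ : {a : E // a ≠ ℓ} → F}
  {σ : V → W} {C : Set F} {Y : Set E}

namespace IsEmbedding

lemma connOn_image_iff_val (hemb : IsEmbedding (G.deleteEdge ℓ) H φ σ) (S : Set {a // a ≠ ℓ}) :
    ConnOn H (φ '' S) ↔ ConnOn G (Subtype.val '' S) :=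
  (hemb.connOn_image_iff S).trans ((isEmbedding_deleteEdge G ℓ).connOn_image_iff S).symm

lemma isCycle_image_iff_val (hemb : IsEmbedding (G.deleteEdge ℓ) H φ σ) (S : Set {a // a ≠ ℓ}) :
    IsCycle H (φ '' S) ↔ IsCycle G (Subtype.val '' S) :=
  (hemb.isCycle_image_iff S).trans ((isEmbedding_deleteEdge G ℓ).isCycle_image_iff S).symm

lemma twoCycles_image_iff_val (hemb : IsEmbedding (G.deleteEdge ℓ) H φ σ)
    (S : Set {a // a ≠ ℓ}) : TwoCycles H (φ '' S) ↔ TwoCycles G (Subtype.val '' S) :=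
  (hemb.twoCycles_image_iff S).trans ((isEmbedding_deleteEdge G ℓ).twoCycles_image_iff S).symm

lemma isBicycle_image_iff_val (hemb : IsEmbedding (G.deleteEdge ℓ) H φ σ)
    (S : Set {a // a ≠ ℓ}) : IsBicycle H (φ '' S) ↔ IsBicycle G (Subtype.val '' S) :=
  (hemb.isBicycle_image_iff S).trans ((isEmbedding_deleteEdge G ℓ).isBicycle_image_iff S).symm

lemma connOn_insert_iff (hemb : IsEmbedding (G.deleteEdge ℓ) H φ σ)
    (hℓ : G.ends ℓ = s(v, v)) (S : Set {a // a ≠ ℓ}) :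
    ConnOn G (insert ℓ (Subtype.val '' S)) ↔ AnchoredAt H (φ '' S) (σ v) :=
  (connOn_insert_loop_iff hℓ (by simp)).trans
    (((isEmbedding_deleteEdge G ℓ).anchoredAt_image_iff S v).trans
      (hemb.anchoredAt_image_iff S v).symm)

lemma exists_isCycle_image_of_twoCycles [Finite E] (hemb : IsEmbedding (G.deleteEdge ℓ) H φ σ)
    (hℓ : G.ends ℓ = s(v, v)) (hY : TwoCycles G Y) :
    ∃ K ⊆ Subtype.val ⁻¹' Y, IsCycle H (φ '' K) := by
  obtain ⟨K, hKY, hK⟩ := hY.exists_isCycle_subset_diff_loop hℓ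
  obtain ⟨K, rfl⟩ := subset_range_iff_exists_image_eq (f := (Subtype.val : {a // a ≠ ℓ} → E)).1
    fun x hx => ⟨⟨x, (hKY hx).2⟩, rfl⟩
  exact ⟨K, fun a ha => (hKY ⟨a, ha, rfl⟩).1, (hemb.isCycle_image_iff_val K).2 hK⟩

variable [Finite E] [Finite W] [Finite F]

lemma image_preimage_val_union_inter_compl_eq (hemb : IsEmbedding (G.deleteEdge ℓ) H φ σ)
    (hℓ : G.ends ℓ = s(v, v)) (hsplit : SplitsAt H (range φ) (σ v)) (hC : IsBicycle H C)
    (hA : (C ∩ range φ).Nonempty) (hAc : (C ∩ (range φ)ᶜ).Nonempty)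
    (hYC : φ '' (Subtype.val ⁻¹' Y) ⊆ C) (hℓY : ℓ ∈ Y) (hY : ConnOn G Y ∧ TwoCycles G Y) :
    φ '' (Subtype.val ⁻¹' Y) ∪ C ∩ (range φ)ᶜ = C := by
  have hYeq : insert ℓ (Subtype.val '' (Subtype.val ⁻¹' Y : Set {a // a ≠ ℓ})) = Y := by
    rw [image_val_preimage_val, insert_sdiff_singleton, insert_eq_of_mem hℓY]
  have hanch := (hemb.connOn_insert_iff hℓ _).1 (hYeq.symm ▸ hY.1)
  obtain ⟨K₁, hK₁Y, hK₁⟩ := hemb.exists_isCycle_image_of_twoCycles hℓ hY.2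
  obtain ⟨K₂, hK₂C, hK₂⟩ := hsplit.compl.exists_isCycle_subset_inter hC hAc
  refine hC.eq_of_subset (union_subset hYC inter_subset_left)
    ⟨(hanch.union (hsplit.compl.anchoredAt_inter hC.1.1 (by rwa [compl_compl]))).connOn,
      φ '' K₁, K₂, (image_mono hK₁Y).trans subset_union_left, hK₂C.trans subset_union_right,
      hK₁, hK₂, fun h => ?_⟩
  obtain ⟨k, hk⟩ := hK₂.1
  have hkA := (hK₂C hk).2
  rw [← h] at hk
  exact hkA (image_subset_range _ _ hk)

/-- The loop `ℓ` stands in for the part of `C` outside `range φ`. -/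
theorem isBicycle_insert_preimage (hemb : IsEmbedding (G.deleteEdge ℓ) H φ σ)
    (hℓ : G.ends ℓ = s(v, v)) (hsplit : SplitsAt H (range φ) (σ v)) (hC : IsBicycle H C)
    (hA : (C ∩ range φ).Nonempty) (hAc : (C ∩ (range φ)ᶜ).Nonempty) :
    IsBicycle G (insert ℓ (Subtype.val '' (φ ⁻¹' C))) := by
  have hCA : φ '' (φ ⁻¹' C) = C ∩ range φ := image_preimage_eq_inter_range
  obtain ⟨K, hKC, hK⟩ := hsplit.exists_isCycle_subset_inter hC hA
  obtain ⟨K, rfl⟩ := subset_range_iff_exists_image_eq.1 (hKC.trans inter_subset_right)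
  refine ⟨⟨(hemb.connOn_insert_iff hℓ _).2 (hCA ▸ hsplit.anchoredAt_inter hC.1.1 hAc),
    twoCycles_insert_loop hℓ ((hemb.isCycle_image_iff_val K).1 hK)
      (image_mono (image_subset_iff.1 (hKC.trans inter_subset_left))) (by simp)⟩, ?_⟩
  rintro Y hY hYc
  have hYC : φ '' (Subtype.val ⁻¹' Y) ⊆ C := by
    rintro _ ⟨a, ha, rfl⟩
    obtain ⟨b, hb, hab⟩ := (mem_insert_iff.1 (hY.1 ha)).resolve_left a.2
    exact Subtype.val_injective hab ▸ hb
  by_cases hℓY : ℓ ∈ Y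
  · have hglue := hemb.image_preimage_val_union_inter_compl_eq hℓ hsplit hC hA hAc hYC hℓY hYc
    obtain ⟨x, hx, hxY⟩ := not_subset.1 hY.2
    obtain ⟨a, ha, rfl⟩ := (mem_insert_iff.1 hx).resolve_left (ne_of_mem_of_not_mem hℓY hxY).symm
    rcases hglue.symm ▸ ha with ⟨b, hb, hba⟩ | ⟨-, hφa⟩
    · exact hxY (hemb.injective_edge hba ▸ hb)
    · exact hφa (mem_range_self a)
  · have hYeq : Subtype.val '' (Subtype.val ⁻¹' Y : Set {a // a ≠ ℓ}) = Y := by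
      rw [image_val_preimage_val, sdiff_singleton_eq_self hℓY]
    have := hC.eq_of_subset hYC ⟨(hemb.connOn_image_iff_val _).2 (by rw [hYeq]; exact hYc.1),
      (hemb.twoCycles_image_iff_val _).2 (by rw [hYeq]; exact hYc.2)⟩
    obtain ⟨y, hyC, hy⟩ := hAc
    exact hy (image_subset_range _ _ (this ▸ hyC))

end IsEmbedding

end LoopDeletion

section LoopSum

variable {V₁ E₁ V₂ E₂ : Type*} {G₁ : MGraph V₁ E₁} {G₂ : MGraph V₂ E₂} {e₁ : E₁} {e₂ : E₂}
  {v₁ : V₁} {v₂ : V₂} {C : Set ({a : E₁ // a ≠ e₁} ⊕ {b : E₂ // b ≠ e₂})}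

lemma phiLoop_self : phiLoop v₁ v₂ v₂ = Sum.inl v₁ := by simp [phiLoop]

lemma eq_of_phiLoop_eq_inl {z : V₂} {u : V₁} (h : phiLoop v₁ v₂ z = Sum.inl u) : u = v₁ := by
  by_cases hz : z = v₂ <;> simp_all [phiLoop]

lemma phiLoop_injective : Function.Injective (phiLoop v₁ v₂) := by
  intro a b h
  by_cases ha : a = v₂ <;> by_cases hb : b = v₂ <;> simp_all [phiLoop]

lemma isEmbedding_loopSum_inl :
    IsEmbedding (G₁.deleteEdge e₁) (loopSum G₁ G₂ e₁ e₂ v₁ v₂) Sum.inl Sum.inl :=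
  ⟨Sum.inl_injective, Sum.inl_injective, fun _ => rfl⟩

lemma isEmbedding_loopSum_inr :
    IsEmbedding (G₂.deleteEdge e₂) (loopSum G₁ G₂ e₁ e₂ v₁ v₂) Sum.inr (phiLoop v₁ v₂) :=
  ⟨Sum.inr_injective, phiLoop_injective, fun _ => rfl⟩

lemma splitsAt_loopSum : SplitsAt (loopSum G₁ G₂ e₁ e₂ v₁ v₂) (range Sum.inl) (Sum.inl v₁) := by
  rintro _ ⟨a, rfl⟩ y hy u hua huy
  rw [compl_range_inl] at hy
  obtain ⟨b, rfl⟩ := hy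
  obtain ⟨u, -, rfl⟩ := isEmbedding_loopSum_inl.exists_eq_of_mem_ends hua
  obtain ⟨z, -, hz⟩ := isEmbedding_loopSum_inr.exists_eq_of_mem_ends huy
  rw [eq_of_phiLoop_eq_inl hz]

lemma splitsAt_loopSum_inr :
    SplitsAt (loopSum G₁ G₂ e₁ e₂ v₁ v₂) (range Sum.inr) (phiLoop v₁ v₂ v₂) := by
  rw [phiLoop_self, ← compl_range_inl]
  exact splitsAt_loopSum.compl

lemma liftL_eq_image (S : Set E₁) :
    liftL e₁ e₂ S = Sum.inl '' (Subtype.val ⁻¹' S) := by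
  ext; simp [liftL, eq_comm]

lemma liftR_eq_image (S : Set E₂) :
    liftR e₁ e₂ S = Sum.inr '' (Subtype.val ⁻¹' S) := by
  ext; simp [liftR, eq_comm]

lemma liftL_insert_image_val (T : Set {a : E₁ // a ≠ e₁}) :
    liftL e₁ e₂ (insert e₁ (Subtype.val '' T)) = Sum.inl '' T := by
  rw [liftL_eq_image]
  congr 1
  ext ⟨a, ha⟩
  simp [ha]

lemma liftR_insert_image_val (T : Set {b : E₂ // b ≠ e₂}) :
    liftR e₁ e₂ (insert e₂ (Subtype.val '' T)) = Sum.inr '' T := by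
  rw [liftR_eq_image]
  congr 1
  ext ⟨b, hb⟩
  simp [hb]

lemma subset_of_liftL_subset {S T : Set E₁} {U : Set E₂}
    (h : liftL e₁ e₂ S ⊆ liftL e₁ e₂ T ∪ liftR e₁ e₂ U) (he₁ : e₁ ∈ T) : S ⊆ T := by
  intro x hx
  by_cases hx₁ : x = e₁
  · exact hx₁ ▸ he₁
  · rcases h ⟨⟨x, hx₁⟩, hx, rfl⟩ with ⟨a, ha, hxa⟩ | ⟨b, -, hxb⟩
    · rwa [show x = a.1 from congrArg Subtype.val (Sum.inl_injective hxa)]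
    · exact (Sum.inl_ne_inr hxb).elim

lemma subset_of_liftR_subset {S : Set E₁} {T U : Set E₂}
    (h : liftR e₁ e₂ U ⊆ liftL e₁ e₂ S ∪ liftR e₁ e₂ T) (he₂ : e₂ ∈ T) : U ⊆ T := by
  intro x hx
  by_cases hx₂ : x = e₂
  · exact hx₂ ▸ he₂
  · rcases h ⟨⟨x, hx₂⟩, hx, rfl⟩ with ⟨a, -, hxa⟩ | ⟨b, hb, hxb⟩
    · exact (Sum.inr_ne_inl hxa).elim
    · rwa [show x = b.1 from congrArg Subtype.val (Sum.inr_injective hxb)]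

/-- The bicycle-side counterpart of `TwoSumCirc`. -/
def TwoSumBicycle (G₁ : MGraph V₁ E₁) (G₂ : MGraph V₂ E₂) (e₁ : E₁) (e₂ : E₂)
    (C : Set ({a : E₁ // a ≠ e₁} ⊕ {b : E₂ // b ≠ e₂})) : Prop :=
  (∃ C₁, IsBicycle G₁ C₁ ∧ e₁ ∉ C₁ ∧ C = liftL e₁ e₂ C₁) ∨
  (∃ C₂, IsBicycle G₂ C₂ ∧ e₂ ∉ C₂ ∧ C = liftR e₁ e₂ C₂) ∨
  (∃ C₁ C₂, IsBicycle G₁ C₁ ∧ IsBicycle G₂ C₂ ∧ e₁ ∈ C₁ ∧ e₂ ∈ C₂ ∧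
    C = liftL e₁ e₂ C₁ ∪ liftR e₁ e₂ C₂)

variable [Finite V₁] [Finite E₁] [Finite V₂] [Finite E₂]

theorem twoSumBicycle_of_isBicycle (hloop₁ : G₁.ends e₁ = s(v₁, v₁))
    (hloop₂ : G₂.ends e₂ = s(v₂, v₂)) (hC : IsBicycle (loopSum G₁ G₂ e₁ e₂ v₁ v₂) C) :
    TwoSumBicycle G₁ G₂ e₁ e₂ C := by
  by_cases hR : (C ∩ (range Sum.inl)ᶜ).Nonempty
  · by_cases hL : (C ∩ range Sum.inl).Nonempty
    · right; right
      refine ⟨_, _,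
        isEmbedding_loopSum_inl.isBicycle_insert_preimage hloop₁ splitsAt_loopSum hC hL hR,
        isEmbedding_loopSum_inr.isBicycle_insert_preimage hloop₂ splitsAt_loopSum_inr hC
          (by rwa [← compl_range_inl]) (by rwa [compl_range_inr]),
        mem_insert _ _, mem_insert _ _, ?_⟩
      rw [liftL_insert_image_val, liftR_insert_image_val,
        image_preimage_inl_union_image_preimage_inr]
    · right; left
      have hCR : C ⊆ range Sum.inr := fun f hf => by
        rw [← compl_range_inl]; exact fun hfL => hL ⟨f, hf, hfL⟩
      obtain ⟨T, rfl⟩ := subset_range_iff_exists_image_eq.1 hCR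
      refine ⟨Subtype.val '' T, (isEmbedding_loopSum_inr.isBicycle_image_iff_val T).1 hC,
        by simp, ?_⟩
      rw [liftR_eq_image, preimage_image_eq _ Subtype.val_injective]
  · left
    have hCL : C ⊆ range Sum.inl := fun f hf => by_contra fun hfL => hR ⟨f, hf, hfL⟩
    obtain ⟨T, rfl⟩ := subset_range_iff_exists_image_eq.1 hCL
    refine ⟨Subtype.val '' T, (isEmbedding_loopSum_inl.isBicycle_image_iff_val T).1 hC,
      by simp, ?_⟩
    rw [liftL_eq_image, preimage_image_eq _ Subtype.val_injective]

/-- Minimality comes from the converse direction: a smaller connected subgraph with two cycles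
would contain a bicycle, which decomposes into bicycles of `G₁` and `G₂` inside `C₁` and `C₂`. -/
theorem isBicycle_liftL_union_liftR (hloop₁ : G₁.ends e₁ = s(v₁, v₁))
    (hloop₂ : G₂.ends e₂ = s(v₂, v₂)) {C₁ : Set E₁} {C₂ : Set E₂} (hC₁ : IsBicycle G₁ C₁)
    (hC₂ : IsBicycle G₂ C₂) (he₁ : e₁ ∈ C₁) (he₂ : e₂ ∈ C₂) :
    IsBicycle (loopSum G₁ G₂ e₁ e₂ v₁ v₂) (liftL e₁ e₂ C₁ ∪ liftR e₁ e₂ C₂) := by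
  have hanch₁ : AnchoredAt (loopSum G₁ G₂ e₁ e₂ v₁ v₂) (liftL e₁ e₂ C₁) (Sum.inl v₁) := by
    rw [liftL_eq_image, ← isEmbedding_loopSum_inl.connOn_insert_iff hloop₁,
      image_val_preimage_val, insert_sdiff_singleton, insert_eq_of_mem he₁]
    exact hC₁.1.1
  have hanch₂ : AnchoredAt (loopSum G₁ G₂ e₁ e₂ v₁ v₂) (liftR e₁ e₂ C₂) (Sum.inl v₁) := by
    rw [liftR_eq_image, ← phiLoop_self, ← isEmbedding_loopSum_inr.connOn_insert_iff hloop₂,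
      image_val_preimage_val, insert_sdiff_singleton, insert_eq_of_mem he₂]
    exact hC₂.1.1
  obtain ⟨K₁, hK₁C, hK₁⟩ := (isEmbedding_loopSum_inl (G₂ := G₂) (e₂ := e₂) (v₂ := v₂)
    ).exists_isCycle_image_of_twoCycles hloop₁ hC₁.1.2
  obtain ⟨K₂, hK₂C, hK₂⟩ := (isEmbedding_loopSum_inr (G₁ := G₁) (e₁ := e₁) (v₁ := v₁)
    ).exists_isCycle_image_of_twoCycles hloop₂ hC₂.1.2
  refine ⟨⟨(hanch₁.union hanch₂).connOn, _, _,
    (liftL_eq_image C₁ ▸ image_mono hK₁C).trans subset_union_left,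
    (liftR_eq_image C₂ ▸ image_mono hK₂C).trans subset_union_right, hK₁, hK₂, fun h => ?_⟩, ?_⟩
  · obtain ⟨_, b, hb, rfl⟩ := hK₂.1
    have hbL : Sum.inr b ∈ Sum.inl '' K₁ := h ▸ mem_image_of_mem Sum.inr hb
    obtain ⟨a, -, hab⟩ := hbL
    exact Sum.inl_ne_inr hab
  rintro Z hZ hZc
  obtain ⟨B, hBZ, hB⟩ := exists_isBicycle_subset hZc
  have hB' := hBZ.trans hZ.subset
  rcases twoSumBicycle_of_isBicycle hloop₁ hloop₂ hB with
    ⟨B₁, hB₁, he₁B, rfl⟩ | ⟨B₂, hB₂, he₂B, rfl⟩ | ⟨B₁, B₂, hB₁, hB₂, -, -, rfl⟩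
  · exact he₁B (hC₁.eq_of_subset (subset_of_liftL_subset hB' he₁) hB₁.1 ▸ he₁)
  · exact he₂B (hC₂.eq_of_subset (subset_of_liftR_subset hB' he₂) hB₂.1 ▸ he₂)
  · rw [hC₁.eq_of_subset (subset_of_liftL_subset (subset_union_left.trans hB') he₁) hB₁.1,
      hC₂.eq_of_subset (subset_of_liftR_subset (subset_union_right.trans hB') he₂) hB₂.1] at hBZ
    exact hZ.2 hBZ

theorem isBicycle_loopSum_iff (hloop₁ : G₁.ends e₁ = s(v₁, v₁))
    (hloop₂ : G₂.ends e₂ = s(v₂, v₂)) :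
    IsBicycle (loopSum G₁ G₂ e₁ e₂ v₁ v₂) C ↔ TwoSumBicycle G₁ G₂ e₁ e₂ C := by
  refine ⟨twoSumBicycle_of_isBicycle hloop₁ hloop₂, ?_⟩
  rintro (⟨C₁, hC₁, he₁, rfl⟩ | ⟨C₂, hC₂, he₂, rfl⟩ | ⟨C₁, C₂, hC₁, hC₂, he₁, he₂, rfl⟩)
  · rwa [liftL_eq_image, isEmbedding_loopSum_inl.isBicycle_image_iff_val,
      image_val_preimage_val, sdiff_singleton_eq_self he₁]
  · rwa [liftR_eq_image, isEmbedding_loopSum_inr.isBicycle_image_iff_val,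
      image_val_preimage_val, sdiff_singleton_eq_self he₂]
  · exact isBicycle_liftL_union_liftR hloop₁ hloop₂ hC₁ hC₂ he₁ he₂

end LoopSum

end Bicirc

open Bicirc in
theorem stmt16_general {V₁ E₁ V₂ E₂ : Type*}
    [Fintype V₁] [Fintype E₁] [Fintype V₂] [Fintype E₂]
    (G₁ : MGraph V₁ E₁) (G₂ : MGraph V₂ E₂) (e₁ : E₁) (e₂ : E₂) (v₁ : V₁) (v₂ : V₂)
    (hloop₁ : G₁.ends e₁ = s(v₁, v₁)) (hloop₂ : G₂.ends e₂ = s(v₂, v₂))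
    (M₁ : Matroid E₁) (M₂ : Matroid E₂)
    (h₁ : IsBicircOf G₁ M₁) (h₂ : IsBicircOf G₂ M₂)
    (M : Matroid ({a : E₁ // a ≠ e₁} ⊕ {b : E₂ // b ≠ e₂}))
    (hM : IsBicircOf (loopSum G₁ G₂ e₁ e₂ v₁ v₂) M) :
    ∀ C, Circ M C ↔ TwoSumCirc M₁ M₂ e₁ e₂ C := by
  intro C
  rw [hM.2 C, isBicycle_loopSum_iff hloop₁ hloop₂]
  simp only [TwoSumBicycle, TwoSumCirc, h₁.2, h₂.2]

open Bicirc in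
theorem stmt16 {V₁ E₁ V₂ E₂ : Type*}
    [Fintype V₁] [Fintype E₁] [Fintype V₂] [Fintype E₂]
    (G₁ : MGraph V₁ E₁) (G₂ : MGraph V₂ E₂) (e₁ : E₁) (e₂ : E₂) (v₁ : V₁) (v₂ : V₂)
    (hloop₁ : G₁.ends e₁ = s(v₁, v₁)) (hloop₂ : G₂.ends e₂ = s(v₂, v₂))
    (M₁ : Matroid E₁) (M₂ : Matroid E₂)
    (h₁ : IsBicircOf G₁ M₁) (h₂ : IsBicircOf G₂ M₂)
    (hs₁ : ¬ SepElem M₁ e₁) (hs₂ : ¬ SepElem M₂ e₂)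
    (M : Matroid ({a : E₁ // a ≠ e₁} ⊕ {b : E₂ // b ≠ e₂}))
    (hM : IsBicircOf (loopSum G₁ G₂ e₁ e₂ v₁ v₂) M) :
    ∀ C, Circ M C ↔ TwoSumCirc M₁ M₂ e₁ e₂ C :=
  stmt16_general G₁ G₂ e₁ e₂ v₁ v₂ hloop₁ hloop₂ M₁ M₂ h₁ h₂ M hM
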